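/- Higher-priority users select weakly larger apertures: assume the metrics m_1 < m_2 < … < m_n are strictly increasing (so in particular pairwise distinct), and let 0 < ω ≤ ω'. Let x*(ω) and x*(ω') denote the unique maximizers on C of f_ω and f_{ω'}, respectively, where f_ω(x) = ω·β·log(g(x)) − Σ_{i=1}^n (λ + β·ψ_i)·x_i. Then x*(ω)_i ≤ x*(ω')_i for every i ∈ {1,…,n}. -/

import Mathlib

/-!
Fix all but one coordinate of the maximizer `x` of `f_ω` and move `x_i` along `[0, 1]`:
the marginal gain `ω β S_i / g(x) - (λ + β ψ_i)` must be `≤ 0` if `x_i < 1` and `≥ 0` if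
`x_i > 0`. Dividing by `ω β S_i`, `x` is a threshold policy: `x_i = 1` when `m_i < 1 / g(x)`
and `x_i = 0` when `m_i > 1 / g(x)`; for `f_{ω'}` the threshold is `ω' / (ω g(x'))`. If some
coordinate dropped from `x` to `x'`, the threshold could not increase, so every coordinate that
rose would have metric equal to both thresholds, which distinct metrics forbid. Hence `x' ≤ x`
with a strict drop, so `g(x') < g(x)` and the threshold strictly increases: a contradiction.
-/

open Real Finset Function Set

lemma sum_mul_update {ι : Type*} [Fintype ι] [DecidableEq ι] (F v : ι → ℝ) (i : ι) (t : ℝ) :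
    ∑ k, F k * update v i t k = ∑ k, F k * v k + F i * (t - v i) := by
  rw [← add_sum_erase _ _ (mem_univ i), ← add_sum_erase _ _ (mem_univ i),
    sum_congr rfl fun k hk => by rw [update_of_ne (ne_of_mem_erase hk)], update_self]
  ring

theorem IsMaxOn.sub_mul_nonpos_of_hasDerivWithinAt {φ : ℝ → ℝ} {s : Set ℝ} {a b d : ℝ}
    (hmax : IsMaxOn φ s a) (hφ : HasDerivWithinAt φ d s a) (hs : Convex ℝ s) (ha : a ∈ s)
    (hb : b ∈ s) : (b - a) * d ≤ 0 := by
  simpa using hmax.localize.hasFDerivWithinAt_nonpos hφ.hasFDerivWithinAt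
    (sub_mem_posTangentConeAt_of_segment_subset (hs.segment_subset ha hb))

section Threshold

variable {ι : Type*}

def IsThresholdPolicy (m : ι → ℝ) (τ : ℝ) (x : ι → ℝ) : Prop :=
  ∀ i, (x i < 1 → τ ≤ m i) ∧ (0 < x i → m i ≤ τ)

namespace IsThresholdPolicy

variable {m : ι → ℝ} {τ τ' : ℝ} {x x' : ι → ℝ}

lemma threshold_le (hx : IsThresholdPolicy m τ x) (hx' : IsThresholdPolicy m τ' x')
    (hxC : ∀ k, x k ∈ Icc (0 : ℝ) 1) (hx'C : ∀ k, x' k ∈ Icc (0 : ℝ) 1) {i : ι}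
    (hi : x' i < x i) : τ' ≤ τ :=
  ((hx' i).1 (hi.trans_le (hxC i).2)).trans ((hx i).2 ((hx'C i).1.trans_lt hi))

lemma le_of_apply_lt (hx : IsThresholdPolicy m τ x) (hx' : IsThresholdPolicy m τ' x')
    (hm : Injective m) (hxC : ∀ k, x k ∈ Icc (0 : ℝ) 1) (hx'C : ∀ k, x' k ∈ Icc (0 : ℝ) 1)
    {i : ι} (hi : x' i < x i) : x' ≤ x := by
  intro j
  by_contra! hj
  have hmi : m i = m j := by
    linarith [(hx' i).1 (hi.trans_le (hxC i).2), (hx i).2 ((hx'C i).1.trans_lt hi),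
      (hx j).1 (hj.trans_le (hx'C j).2), (hx' j).2 ((hxC j).1.trans_lt hj)]
  exact (hm hmi ▸ hi).not_gt hj

end IsThresholdPolicy

end Threshold

section LogUtility

variable {ι : Type*} [Fintype ι] [DecidableEq ι]

noncomputable def logUtility (A b : ℝ) (S c : ι → ℝ) (y : ι → ℝ) : ℝ :=
  A * log (b + ∑ k, S k * y k) - ∑ k, c k * y k

variable {A b : ℝ} {S c x : ι → ℝ}

lemma hasDerivAt_logUtility_update (hG : b + ∑ k, S k * x k ≠ 0) (i : ι) :
    HasDerivAt (fun t => logUtility A b S c (update x i t))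
      (A * S i / (b + ∑ k, S k * x k) - c i) (x i) := by
  have hshift : HasDerivAt (fun t => t - x i) 1 (x i) := (hasDerivAt_id _).sub_const _
  have hinner : HasDerivAt (fun t => b + ∑ k, S k * x k + S i * (t - x i)) (S i) (x i) := by
    simpa using (hshift.const_mul (S i)).const_add (b + ∑ k, S k * x k)
  have hline := ((hinner.log (by simpa using hG)).const_mul A).sub
    ((hshift.const_mul (c i)).const_add (∑ k, c k * x k))
  simp only [sub_self, mul_zero, add_zero, mul_one] at hline
  have hrestrict : (fun t => logUtility A b S c (update x i t)) = fun t =>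
      A * log (b + ∑ k, S k * x k + S i * (t - x i)) - (∑ k, c k * x k + c i * (t - x i)) := by
    funext t
    simp only [logUtility, sum_mul_update, add_assoc]
  rw [hrestrict, mul_div_assoc]
  exact hline

theorem logUtility_kkt (hG : b + ∑ k, S k * x k ≠ 0) (hxC : ∀ k, x k ∈ Icc (0 : ℝ) 1)
    (hmax : ∀ y : ι → ℝ, (∀ k, y k ∈ Icc (0 : ℝ) 1) → logUtility A b S c y ≤ logUtility A b S c x)
    (i : ι) :
    (x i < 1 → A * S i / (b + ∑ k, S k * x k) ≤ c i) ∧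
      (0 < x i → c i ≤ A * S i / (b + ∑ k, S k * x k)) := by
  have hφ : IsMaxOn (fun t => logUtility A b S c (update x i t)) (Icc 0 1) (x i) := by
    intro t ht
    simp only [mem_ofPred_eq, update_eq_self]
    refine hmax _ fun k => ?_
    rcases eq_or_ne k i with rfl | hk
    · simpa using ht
    · simpa [update_of_ne hk] using hxC k
  have hd := (hasDerivAt_logUtility_update (A := A) (c := c) hG i).hasDerivWithinAt (s := Icc 0 1)
  have hup := hφ.sub_mul_nonpos_of_hasDerivWithinAt hd (convex_Icc 0 1) (hxC i)
    (right_mem_Icc.2 zero_le_one)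
  have hdown := hφ.sub_mul_nonpos_of_hasDerivWithinAt hd (convex_Icc 0 1) (hxC i)
    (left_mem_Icc.2 zero_le_one)
  rw [zero_sub, neg_mul, neg_nonpos] at hdown
  exact ⟨fun h => sub_nonpos.1 (nonpos_of_mul_nonpos_right hup (sub_pos.2 h)),
    fun h => sub_nonneg.1 (nonneg_of_mul_nonneg_right hdown h)⟩

lemma isThresholdPolicy_of_maximizer {κ : ℝ} {m : ι → ℝ} (hκ : 0 < κ) (hS : ∀ k, 0 < S k)
    (hm : ∀ k, m k = c k / (κ * S k)) (hG : 0 < b + ∑ k, S k * x k)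
    (hxC : ∀ k, x k ∈ Icc (0 : ℝ) 1)
    (hmax : ∀ y : ι → ℝ, (∀ k, y k ∈ Icc (0 : ℝ) 1) → logUtility A b S c y ≤ logUtility A b S c x) :
    IsThresholdPolicy m (A / (κ * (b + ∑ k, S k * x k))) x := by
  intro i
  have hκS : 0 < κ * S i := mul_pos hκ (hS i)
  have hκG : 0 < κ * (b + ∑ k, S k * x k) := mul_pos hκ hG
  obtain ⟨hup, hdown⟩ := logUtility_kkt hG.ne' hxC hmax i
  rw [hm, div_le_div_iff₀ hκG hκS, div_le_div_iff₀ hκS hκG]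
  constructor
  · intro h
    linear_combination κ * (div_le_iff₀ hG).1 (hup h)
  · intro h
    linear_combination κ * (le_div_iff₀ hG).1 (hdown h)

end LogUtility

theorem higher_priority_larger_aperture_general
    (n : ℕ)
    (β lam S0 : ℝ) (hβ : 0 < β) (hS0 : 0 ≤ S0)
    (S ψ : Fin n → ℝ) (hS : ∀ i, 0 < S i)
    (ω ω' : ℝ) (hω : 0 < ω) (hωω' : ω ≤ ω')
    (g : (Fin n → ℝ) → ℝ) (hg : ∀ x, g x = 1 + S0 + ∑ i, S i * x i)
    (m : Fin n → ℝ) (hm : ∀ i, m i = (β * ψ i + lam) / (ω * β * S i))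
    (hmono : StrictMono m)
    (f f' : (Fin n → ℝ) → ℝ)
    (hf : ∀ x, f x = ω * β * Real.log (g x) - ∑ i, (lam + β * ψ i) * x i)
    (hf' : ∀ x, f' x = ω' * β * Real.log (g x) - ∑ i, (lam + β * ψ i) * x i)
    (x x' : Fin n → ℝ)
    (hxC : ∀ i, x i ∈ Set.Icc (0:ℝ) 1)
    (hx'C : ∀ i, x' i ∈ Set.Icc (0:ℝ) 1)
    (hxmax : ∀ y : Fin n → ℝ, (∀ i, y i ∈ Set.Icc (0:ℝ) 1) → f y ≤ f x)
    (hx'max : ∀ y : Fin n → ℝ, (∀ i, y i ∈ Set.Icc (0:ℝ) 1) → f' y ≤ f' x') :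
    ∀ i, x i ≤ x' i := by
  intro i
  by_contra! hi
  have hG : ∀ y : Fin n → ℝ, (∀ k, y k ∈ Icc (0 : ℝ) 1) → 0 < 1 + S0 + ∑ k, S k * y k :=
    fun y hy => by linarith [sum_nonneg (s := univ) fun k _ => mul_nonneg (hS k).le (hy k).1]
  obtain rfl : f = logUtility (ω * β) (1 + S0) S (fun k => lam + β * ψ k) :=
    funext fun y => by rw [hf, hg]; rfl
  obtain rfl : f' = logUtility (ω' * β) (1 + S0) S (fun k => lam + β * ψ k) :=
    funext fun y => by rw [hf', hg]; rfl
  have hm' : ∀ k, m k = (lam + β * ψ k) / (ω * β * S k) := fun k => by rw [hm, add_comm]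
  have hωβ : 0 < ω * β := mul_pos hω hβ
  have hx := isThresholdPolicy_of_maximizer hωβ hS hm' (hG x hxC) hxC hxmax
  have hx' := isThresholdPolicy_of_maximizer hωβ hS hm' (hG x' hx'C) hx'C hx'max
  have hle := hx.le_of_apply_lt hx' hmono.injective hxC hx'C hi
  have hsum : ∑ k, S k * x' k < ∑ k, S k * x k :=
    sum_lt_sum (fun k _ => mul_le_mul_of_nonneg_left (hle k) (hS k).le)
      ⟨i, mem_univ i, mul_lt_mul_of_pos_left hi (hS i)⟩
  have hτ : ω * β / (ω * β * (1 + S0 + ∑ k, S k * x k)) <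
      ω' * β / (ω * β * (1 + S0 + ∑ k, S k * x' k)) := by
    have hGx := hG x hxC
    have hGx' := hG x' hx'C
    have hω'β : 0 < ω' * β := mul_pos (hω.trans_le hωω') hβ
    calc _ ≤ ω' * β / (ω * β * (1 + S0 + ∑ k, S k * x k)) := by gcongr
      _ < _ := by gcongr
  exact hτ.not_ge (hx.threshold_le hx' hxC hx'C hi)

theorem higher_priority_larger_aperture
    (n : ℕ) (hn : 1 ≤ n)
    (β lam S0 : ℝ) (hβ : 0 < β) (hlam : 0 ≤ lam) (hS0 : 0 ≤ S0)
    (S ψ : Fin n → ℝ) (hS : ∀ i, 0 < S i) (hψ : ∀ i, 0 ≤ ψ i)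
    (ω ω' : ℝ) (hω : 0 < ω) (hωω' : ω ≤ ω')
    (g : (Fin n → ℝ) → ℝ) (hg : ∀ x, g x = 1 + S0 + ∑ i, S i * x i)
    (m : Fin n → ℝ) (hm : ∀ i, m i = (β * ψ i + lam) / (ω * β * S i))
    (hmono : StrictMono m)
    (f f' : (Fin n → ℝ) → ℝ)
    (hf : ∀ x, f x = ω * β * Real.log (g x) - ∑ i, (lam + β * ψ i) * x i)
    (hf' : ∀ x, f' x = ω' * β * Real.log (g x) - ∑ i, (lam + β * ψ i) * x i)
    (x x' : Fin n → ℝ)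
    (hxC : ∀ i, x i ∈ Set.Icc (0:ℝ) 1)
    (hx'C : ∀ i, x' i ∈ Set.Icc (0:ℝ) 1)
    (hxmax : ∀ y : Fin n → ℝ, (∀ i, y i ∈ Set.Icc (0:ℝ) 1) → f y ≤ f x)
    (hx'max : ∀ y : Fin n → ℝ, (∀ i, y i ∈ Set.Icc (0:ℝ) 1) → f' y ≤ f' x') :
    ∀ i, x i ≤ x' i :=
  higher_priority_larger_aperture_general n β lam S0 hβ hS0 S ψ hS ω ω' hω hωω' g hg m hm hmono f f'
    hf hf' x x' hxC hx'C hxmax hx'max
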